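/- arXiv:2207.12986 — 2 statements merged into one kernel-verified Lean document; each statement's English description precedes it below -/
import Mathlib

section
/- Let γ₁, γ₂ > 1, ρ₁, ρ₂, δ ≥ 0, β > 0 and γ ≥ 1. For non-negative integers j, k define α_{j,k} = min{ γ₁ 2^{-k} j^{ρ₁}, β γ₂ 2^{-j} 2^{-k} 2^{δk} k^{ρ₂} }. Then there is a constant c depending only on ρ₁, ρ₂, γ, δ such that ∑_{j,k ≥ 0} α_{j,k} ≤ c γ₁ (log₂(e + γ₂))^{1+ρ₁} + β/(2γ). -/
/-!
For each `k`, split the sum over `j` at `M = N + B (k + 1)`, where `2 ^ N ≥ γ₂` and `B` is a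
natural number with `B ≥ δ + ρ₂` and `2 ^ B ≥ 8 γ`. Below `M` use the first term of the minimum:
the row sum is at most `γ₁ 2^{-k} M^{1+ρ₁}`, and `M ≲ (k + 1) log₂(e + γ₂)`, so summing over `k`
against `2^{-k}` gives `c γ₁ (log₂(e + γ₂))^{1+ρ₁}`. From `M` on use the second term, geometric in
`j`: its tail is `2 β γ₂ 2^{-M} 2^{-k} 2^{δk} k^{ρ₂}`, in which `2^{-N}` absorbs `γ₂` and
`2^{-B(k+1)}` absorbs `2^{δk} k^{ρ₂}` and `8 γ`, leaving `β / (4γ) 2^{-k}`.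
-/

open Real

theorem two_rpow_neg_natCast (n : ℕ) : (2 : ℝ) ^ (-(n : ℝ)) = (1 / 2) ^ n := by
  rw [rpow_neg zero_le_two, rpow_natCast, one_div, inv_pow]

theorem natCast_rpow_le_two_rpow_mul {ρ : ℝ} (hρ : 0 ≤ ρ) (k : ℕ) :
    (k : ℝ) ^ ρ ≤ 2 ^ (ρ * k) := by
  rw [mul_comm, rpow_mul zero_le_two, rpow_natCast]
  exact rpow_le_rpow k.cast_nonneg (mod_cast Nat.lt_two_pow_self.le) hρ

theorem one_le_logb_two_exp_one_add {x : ℝ} (hx : 0 ≤ x) : 1 ≤ logb 2 (exp 1 + x) := by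
  rw [le_logb_iff_rpow_le one_lt_two (by positivity), rpow_one]
  linarith [exp_one_gt_d9]

theorem exists_two_pow_ge_and_le_two_mul_logb {x : ℝ} (hx : 0 < x) :
    ∃ N : ℕ, x ≤ 2 ^ N ∧ (N : ℝ) ≤ 2 * logb 2 (exp 1 + x) := by
  refine ⟨⌈logb 2 x⌉₊, ?_, ?_⟩
  · calc x = 2 ^ logb 2 x := (rpow_logb two_pos (by norm_num) hx).symm
      _ ≤ 2 ^ (⌈logb 2 x⌉₊ : ℝ) := rpow_le_rpow_of_exponent_le one_le_two (Nat.le_ceil _)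
      _ = 2 ^ ⌈logb 2 x⌉₊ := rpow_natCast _ _
  · have hlog : logb 2 x ≤ logb 2 (exp 1 + x) :=
      logb_le_logb_of_le one_lt_two hx (by linarith [exp_pos 1])
    have hone := one_le_logb_two_exp_one_add hx.le
    by_cases h : 0 ≤ logb 2 x
    · linarith [Nat.ceil_lt_add_one h]
    · rw [Nat.ceil_eq_zero.mpr (by linarith), Nat.cast_zero]
      linarith

theorem summable_add_one_rpow_mul_geometric_two (r : ℝ) :
    Summable fun k : ℕ => ((k : ℝ) + 1) ^ r * (1 / 2) ^ k := by
  have hnat : Summable fun k : ℕ => ((k : ℝ) + 1) ^ ⌈r⌉₊ * (1 / 2) ^ k := by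
    have := (summable_nat_add_iff 1).mpr
      (summable_pow_mul_geometric_of_norm_lt_one (R := ℝ) ⌈r⌉₊ (r := 1 / 2) (by norm_num))
    refine (this.mul_left 2).congr fun k => ?_
    push_cast
    ring
  refine hnat.of_nonneg_of_le (fun k => by positivity) fun k => ?_
  gcongr
  rw [← rpow_natCast]
  exact rpow_le_rpow_of_exponent_le (by linarith [k.cast_nonneg (α := ℝ)]) (Nat.le_ceil r)

theorem sum_range_natCast_rpow_le {ρ : ℝ} (hρ : 0 ≤ ρ) (M : ℕ) :
    ∑ j ∈ Finset.range M, (j : ℝ) ^ ρ ≤ (M : ℝ) ^ (1 + ρ) := by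
  rw [rpow_one_add' M.cast_nonneg (by positivity)]
  calc ∑ j ∈ Finset.range M, (j : ℝ) ^ ρ ≤ ∑ _j ∈ Finset.range M, (M : ℝ) ^ ρ := by
        gcongr with j hj
        exact (Finset.mem_range.mp hj).le
    _ = M * (M : ℝ) ^ ρ := by simp

theorem tsum_ofReal_min_le_sum_range_add {f g : ℕ → ℝ} (hf : ∀ j, 0 ≤ f j)
    (hg : ∀ j, 0 ≤ g j) (M : ℕ) {t : ℝ} (ht : HasSum (fun j => g (j + M)) t) :
    ∑' j, ENNReal.ofReal (min (f j) (g j))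
      ≤ ENNReal.ofReal (∑ j ∈ Finset.range M, f j + t) := by
  rw [← ENNReal.summable.sum_add_tsum_nat_add',
    ENNReal.ofReal_add (Finset.sum_nonneg fun j _ => hf j) (ht.nonneg fun j => hg _),
    ENNReal.ofReal_sum_of_nonneg fun j _ => hf j, ← ht.tsum_eq,
    ENNReal.ofReal_tsum_of_nonneg (fun j => hg _) ht.summable]
  gcongr with j _ j
  · exact min_le_left _ _
  · exact min_le_right _ _

theorem ENNReal.tsum_tsum_ofReal_le {α β : Type*} {a : α → β → ℝ} {b : β → ℝ}
    (hb₀ : ∀ k, 0 ≤ b k) (hb : Summable b)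
    (h : ∀ k, ∑' j, ENNReal.ofReal (a j k) ≤ ENNReal.ofReal (b k)) :
    ∑' j, ∑' k, ENNReal.ofReal (a j k) ≤ ENNReal.ofReal (∑' k, b k) := by
  rw [ENNReal.tsum_comm, ENNReal.ofReal_tsum_of_nonneg hb₀ hb]
  exact ENNReal.tsum_le_tsum h

theorem sum_range_natCast_rpow_le_of_le_two_mul {ρ L : ℝ} (hρ : 0 ≤ ρ) (hL : 1 ≤ L) {N : ℕ}
    (hN : (N : ℝ) ≤ 2 * L) (B k : ℕ) :
    ∑ j ∈ Finset.range (N + B * (k + 1)), (j : ℝ) ^ ρ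
      ≤ ((2 + B) * L) ^ (1 + ρ) * ((k : ℝ) + 1) ^ (1 + ρ) := by
  refine (sum_range_natCast_rpow_le hρ _).trans ?_
  rw [← mul_rpow (by positivity) (by positivity)]
  gcongr
  have hk : (0 : ℝ) ≤ k := k.cast_nonneg
  have hBL : (0 : ℝ) ≤ B * (L - 1) := mul_nonneg B.cast_nonneg (sub_nonneg.mpr hL)
  push_cast
  nlinarith [mul_nonneg hBL hk]

theorem second_term_tail_le {β γ γ₂ δ ρ : ℝ} (hβ : 0 ≤ β) (hγ : 0 < γ) (hρ : 0 ≤ ρ)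
    {N B : ℕ} (hN : γ₂ ≤ 2 ^ N) (hBδ : δ + ρ ≤ B) (hBγ : 8 * γ ≤ 2 ^ B) (k : ℕ) :
    β * γ₂ * (1 / 2) ^ k * 2 ^ (δ * k) * (k : ℝ) ^ ρ * (1 / 2) ^ (N + B * (k + 1)) * 2
      ≤ β / (4 * γ) * (1 / 2) ^ k := by
  have hN' : γ₂ * (1 / 2) ^ N ≤ 1 := by
    rw [one_div, inv_pow, ← div_eq_mul_inv]
    exact div_le_one_of_le₀ hN (by positivity)
  have hB' : (1 / 2 : ℝ) ^ B ≤ (8 * γ)⁻¹ := by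
    rw [one_div, inv_pow]
    exact inv_anti₀ (by positivity) hBγ
  have hk : 2 ^ (δ * k) * (k : ℝ) ^ ρ * (1 / 2) ^ (B * k) ≤ 1 := by
    calc 2 ^ (δ * k) * (k : ℝ) ^ ρ * (1 / 2) ^ (B * k)
        ≤ 2 ^ (δ * k) * 2 ^ (ρ * k) * (1 / 2) ^ (B * k) := by
          gcongr
          exact natCast_rpow_le_two_rpow_mul hρ k
      _ = 2 ^ ((δ + ρ) * k) / 2 ^ ((B : ℝ) * k) := by
          rw [add_mul, rpow_add two_pos, ← Nat.cast_mul, rpow_natCast, one_div, inv_pow,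
            div_eq_mul_inv]
      _ ≤ 1 := div_le_one_of_le₀ (rpow_le_rpow_of_exponent_le one_le_two (by gcongr))
          (by positivity)
  calc β * γ₂ * (1 / 2) ^ k * 2 ^ (δ * k) * (k : ℝ) ^ ρ * (1 / 2) ^ (N + B * (k + 1)) * 2
      = 2 * β * (γ₂ * (1 / 2) ^ N) * (1 / 2) ^ B
          * (2 ^ (δ * k) * (k : ℝ) ^ ρ * (1 / 2) ^ (B * k)) * (1 / 2) ^ k := by ring
    _ ≤ 2 * β * 1 * (8 * γ)⁻¹ * 1 * (1 / 2) ^ k := by gcongr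
    _ = β / (4 * γ) * (1 / 2) ^ k := by field_simp; ring

theorem tsum_ofReal_min_row_le {ρ₁ ρ₂ δ γ γ₁ γ₂ β L : ℝ} (hρ₁ : 0 ≤ ρ₁) (hρ₂ : 0 ≤ ρ₂)
    (hγ : 0 < γ) (hγ₁ : 0 ≤ γ₁) (hγ₂ : 0 ≤ γ₂) (hβ : 0 ≤ β) (hL : 1 ≤ L) {N B : ℕ}
    (hN : γ₂ ≤ 2 ^ N) (hNL : (N : ℝ) ≤ 2 * L) (hBδ : δ + ρ₂ ≤ B) (hBγ : 8 * γ ≤ 2 ^ B)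
    (k : ℕ) :
    ∑' j : ℕ, ENNReal.ofReal (min (γ₁ * (1 / 2) ^ k * (j : ℝ) ^ ρ₁)
        (β * γ₂ * (1 / 2) ^ j * (1 / 2) ^ k * 2 ^ (δ * k) * (k : ℝ) ^ ρ₂))
      ≤ ENNReal.ofReal (γ₁ * ((2 + B) * L) ^ (1 + ρ₁) * (((k : ℝ) + 1) ^ (1 + ρ₁) * (1 / 2) ^ k)
          + β / (4 * γ) * (1 / 2) ^ k) := by
  set M := N + B * (k + 1)
  have htail : HasSum
      (fun j => β * γ₂ * (1 / 2) ^ (j + M) * (1 / 2) ^ k * 2 ^ (δ * k) * (k : ℝ) ^ ρ₂)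
      (β * γ₂ * (1 / 2) ^ k * 2 ^ (δ * k) * (k : ℝ) ^ ρ₂ * (1 / 2) ^ M * 2) :=
    (hasSum_geometric_two.mul_left _).congr_fun fun j => by rw [pow_add]; ring
  refine (tsum_ofReal_min_le_sum_range_add
    (f := fun j : ℕ => γ₁ * (1 / 2) ^ k * (j : ℝ) ^ ρ₁)
    (g := fun j : ℕ => β * γ₂ * (1 / 2) ^ j * (1 / 2) ^ k * 2 ^ (δ * k) * (k : ℝ) ^ ρ₂)
    (fun j => by positivity) (fun j => by positivity) M htail).trans
    (ENNReal.ofReal_le_ofReal (add_le_add ?_ (second_term_tail_le hβ hγ hρ₂ hN hBδ hBγ k)))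
  rw [← Finset.mul_sum]
  calc γ₁ * (1 / 2) ^ k * ∑ j ∈ Finset.range M, (j : ℝ) ^ ρ₁
      ≤ γ₁ * (1 / 2) ^ k * (((2 + B) * L) ^ (1 + ρ₁) * ((k : ℝ) + 1) ^ (1 + ρ₁)) := by
        gcongr
        exact sum_range_natCast_rpow_le_of_le_two_mul hρ₁ hL hNL B k
    _ = _ := by ring

theorem stmt0_general (ρ₁ ρ₂ δ γ : ℝ) (hρ₁ : 0 ≤ ρ₁) (hρ₂ : 0 ≤ ρ₂) (hγ : 1 ≤ γ) :
    ∃ c : ℝ, 0 < c ∧ ∀ γ₁ γ₂ β : ℝ, 1 < γ₁ → 1 < γ₂ → 0 < β →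
      (∑' (j : ℕ) (k : ℕ), ENNReal.ofReal
          (min (γ₁ * (2:ℝ) ^ (-(k:ℝ)) * (j:ℝ) ^ ρ₁)
               (β * γ₂ * (2:ℝ) ^ (-(j:ℝ)) * (2:ℝ) ^ (-(k:ℝ)) * (2:ℝ) ^ (δ * (k:ℝ)) *
                 (k:ℝ) ^ ρ₂)))
        ≤ ENNReal.ofReal
            (c * γ₁ * (Real.logb 2 (Real.exp 1 + γ₂)) ^ (1 + ρ₁) + β / (2 * γ)) := by
  obtain ⟨B₁, hB₁⟩ := exists_nat_ge (δ + ρ₂)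
  obtain ⟨B₂, hB₂⟩ := pow_unbounded_of_one_lt (8 * γ) one_lt_two
  have hBδ : δ + ρ₂ ≤ (max B₁ B₂ : ℕ) := hB₁.trans (mod_cast le_max_left _ _)
  have hBγ : 8 * γ ≤ 2 ^ max B₁ B₂ :=
    hB₂.le.trans (pow_le_pow_right₀ one_le_two (le_max_right _ _))
  have hS := summable_add_one_rpow_mul_geometric_two (1 + ρ₁)
  refine ⟨(2 + (max B₁ B₂ : ℕ)) ^ (1 + ρ₁) * ∑' k : ℕ, ((k : ℝ) + 1) ^ (1 + ρ₁) * (1 / 2) ^ k,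
    mul_pos (by positivity) (hS.tsum_pos (fun k => by positivity) 0 (by simp)),
    fun γ₁ γ₂ β hγ₁ hγ₂ hβ => ?_⟩
  obtain ⟨N, hN, hNL⟩ := exists_two_pow_ge_and_le_two_mul_logb (zero_lt_one.trans hγ₂)
  have hL := one_le_logb_two_exp_one_add (zero_lt_one.trans hγ₂).le
  simp only [two_rpow_neg_natCast]
  refine (ENNReal.tsum_tsum_ofReal_le (fun k => by positivity)
    ((hS.mul_left _).add (summable_geometric_two.mul_left _))
    (tsum_ofReal_min_row_le hρ₁ hρ₂ (by linarith) (by linarith) (by linarith) hβ.le hL hN hNL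
      hBδ hBγ)).trans (ENNReal.ofReal_le_ofReal (le_of_eq ?_))
  rw [(hS.mul_left _).tsum_add (summable_geometric_two.mul_left _), tsum_mul_left,
    tsum_mul_left, tsum_geometric_two, mul_rpow (by positivity) (by positivity)]
  ring

/-- summation lemma (Lemma CRRlema1). -/
theorem stmt0 (ρ₁ ρ₂ δ γ : ℝ) (hρ₁ : 0 ≤ ρ₁) (hρ₂ : 0 ≤ ρ₂) (hδ : 0 ≤ δ) (hγ : 1 ≤ γ) :
    ∃ c : ℝ, 0 < c ∧ ∀ γ₁ γ₂ β : ℝ, 1 < γ₁ → 1 < γ₂ → 0 < β →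
      (∑' (j : ℕ) (k : ℕ), ENNReal.ofReal
          (min (γ₁ * (2:ℝ) ^ (-(k:ℝ)) * (j:ℝ) ^ ρ₁)
               (β * γ₂ * (2:ℝ) ^ (-(j:ℝ)) * (2:ℝ) ^ (-(k:ℝ)) * (2:ℝ) ^ (δ * (k:ℝ)) *
                 (k:ℝ) ^ ρ₂)))
        ≤ ENNReal.ofReal
            (c * γ₁ * (Real.logb 2 (Real.exp 1 + γ₂)) ^ (1 + ρ₁) + β / (2 * γ)) :=
  stmt0_general ρ₁ ρ₂ δ γ hρ₁ hρ₂ hγ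
end

section
/- Let D be a dyadic system and S ⊂ D a Λ-Carleson family with Λ > 1. For every integer t ≥ 2, S can be decomposed as S = S₁ ∪ ⋯ ∪ S_t where each S_i is (1 + (Λ−1)/t)-Carleson. -/
open MeasureTheory
open scoped ENNReal

def IsCarleson {X : Type*} [MeasurableSpace X] (μ : Measure X) (S : Set (Set X))
    (Λ : ℝ) : Prop :=
  ∀ Q ∈ S, ∑' (P : {P : Set X // P ∈ S ∧ P ⊆ Q}), μ P.1 ≤ ENNReal.ofReal Λ * μ Q

/-!
Colour a finite subfamily greedily from the top down: a maximal cube `Q` receives the colour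
whose cubes strictly inside `Q` carry the least mass. By the Carleson condition at `Q` all
colours together carry at most `(Λ - 1) μ Q`, so the chosen one carries at most
`(Λ - 1) μ Q / t`. The Carleson condition only involves finitely many cubes at a time, so
Rado's selection principle glues these finite colourings into a colouring of the whole family.
-/

section

open Finset
open scoped Classical

variable {X : Type*} [MeasurableSpace X] {μ : Measure X} {Λ : ℝ}

theorem IsCarleson.subset {S S' : Set (Set X)} (hS : IsCarleson μ S Λ) (h : S' ⊆ S) :
    IsCarleson μ S' Λ := fun Q hQ =>
  (ENNReal.tsum_mono_subtype (fun P => μ P) (s := {P | P ∈ S' ∧ P ⊆ Q})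
    (t := {P | P ∈ S ∧ P ⊆ Q}) fun _ hP => ⟨h hP.1, hP.2⟩).trans (hS Q (h hQ))

theorem isCarleson_coe_finset_iff {F : Finset (Set X)} :
    IsCarleson μ (F : Set (Set X)) Λ ↔
      ∀ Q ∈ F, ∑ P ∈ F with P ⊆ Q, μ P ≤ ENNReal.ofReal Λ * μ Q := by
  refine forall₂_congr fun Q _ => ?_
  rw [← Finset.tsum_subtype]
  exact iff_of_eq <| congrArg (· ≤ _) <|
    (Equiv.subtypeEquivRight (p := fun P => P ∈ ↑F ∧ P ⊆ Q)
      (q := (· ∈ F.filter (· ⊆ Q))) fun P => by simp).tsum_eq fun P => μ P.1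

theorem isCarleson_of_forall_finset {S : Set (Set X)}
    (h : ∀ G : Finset (Set X), ↑G ⊆ S → IsCarleson μ (G : Set (Set X)) Λ) :
    IsCarleson μ S Λ := by
  intro Q hQ
  rw [ENNReal.tsum_eq_iSup_sum]
  refine iSup_le fun s => ?_
  set G := insert Q (s.map (Function.Embedding.subtype _))
  have hGS : ↑G ⊆ S := by
    simp only [G, coe_insert, coe_map, Set.insert_subset_iff, Set.image_subset_iff]
    exact ⟨hQ, fun P _ => P.2.1⟩
  calc ∑ P ∈ s, μ P.1 = ∑ P ∈ s.map (Function.Embedding.subtype _), μ P := by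
        rw [sum_map]; rfl
    _ ≤ ∑ P ∈ G with P ⊆ Q, μ P := sum_le_sum_of_subset fun P hP => by
        obtain ⟨P, hPs, rfl⟩ := mem_map.1 hP
        exact mem_filter.2 ⟨mem_insert_of_mem (mem_map_of_mem _ hPs), P.2.2⟩
    _ ≤ _ := isCarleson_coe_finset_iff.1 (h G hGS) Q (mem_insert_self _ _)

theorem IsCarleson.insert {F : Finset (Set X)} {Q : Set X} (hF : IsCarleson μ ↑F Λ)
    (hQ : ∀ R ∈ F, ¬Q ⊆ R)
    (hmass : ∑ P ∈ insert Q F with P ⊆ Q, μ P ≤ ENNReal.ofReal Λ * μ Q) :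
    IsCarleson μ ↑(insert Q F) Λ := by
  rw [isCarleson_coe_finset_iff] at hF ⊢
  intro R hR
  rcases mem_insert.1 hR with rfl | hR
  · exact hmass
  · rw [filter_insert, if_neg (hQ R hR)]
    exact hF R hR

theorem exists_add_le_of_add_sum_le (hΛ : 1 ≤ Λ) {t : ℕ} (ht : t ≠ 0) {a : ℝ≥0∞}
    (L : Fin t → ℝ≥0∞) (h : a + ∑ i, L i ≤ ENNReal.ofReal Λ * a) :
    ∃ i, a + L i ≤ ENNReal.ofReal (1 + (Λ - 1) / t) * a := by
  have : Nonempty (Fin t) := ⟨⟨0, Nat.pos_of_ne_zero ht⟩⟩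
  obtain ⟨i₀, hi₀⟩ := Finite.exists_min L
  refine ⟨i₀, ?_⟩
  have hΛ' : 0 ≤ Λ - 1 := by linarith
  have htpos : (0 : ℝ) < t := by positivity
  obtain rfl | ha := eq_or_ne a ⊤
  · rw [ENNReal.mul_top (by simp; positivity)]
    exact le_top
  have hsum : ∑ i, L i ≤ ENNReal.ofReal (Λ - 1) * a := by
    refine ENNReal.le_of_add_le_add_left ha (h.trans_eq ?_)
    rw [← one_add_mul, ← ENNReal.ofReal_one, ← ENNReal.ofReal_add zero_le_one hΛ']
    ring_nf
  have hmin : t * L i₀ ≤ ∑ i, L i := by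
    simpa using card_nsmul_le_sum univ L (L i₀) fun i _ => hi₀ i
  rw [ENNReal.ofReal_add zero_le_one (by positivity), ENNReal.ofReal_one, add_mul, one_mul]
  gcongr
  rw [ENNReal.ofReal_div_of_pos htpos, ENNReal.ofReal_natCast, ← ENNReal.mul_div_right_comm,
    ENNReal.le_div_iff_mul_le (by simp [ht]) (by simp), mul_comm]
  exact hmin.trans hsum

theorem IsCarleson.exists_coloring_finset {S : Set (Set X)} (hS : IsCarleson μ S Λ)
    (hΛ : 1 ≤ Λ) {t : ℕ} (ht : t ≠ 0) (F : Finset (Set X)) (hF : ↑F ⊆ S) :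
    ∃ c : Set X → Fin t, ∀ i, IsCarleson μ ↑(F.filter (c · = i)) (1 + (Λ - 1) / t) := by
  induction F using Finset.strongInduction with
  | H F ih =>
  obtain rfl | hne := F.eq_empty_or_nonempty
  · exact ⟨fun _ => ⟨0, Nat.pos_of_ne_zero ht⟩, fun i => by simp [IsCarleson]⟩
  obtain ⟨Q, hQF, hQmax⟩ := F.exists_maximal hne
  obtain ⟨c, hc⟩ :=
    ih (F.erase Q) (erase_ssubset hQF) ((coe_subset.2 (erase_subset _ _)).trans hF)
  set L : Fin t → ℝ≥0∞ := fun i => ∑ P ∈ F.erase Q with P ⊆ Q ∧ c P = i, μ P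
  have hL : μ Q + ∑ i, L i ≤ ENNReal.ofReal Λ * μ Q := by
    calc μ Q + ∑ i, L i = ∑ P ∈ F with P ⊆ Q, μ P := by
          simp only [L, ← filter_filter, sum_fiberwise]
          rw [filter_erase]
          exact add_sum_erase _ _ (mem_filter.2 ⟨hQF, subset_rfl⟩)
      _ ≤ _ := isCarleson_coe_finset_iff.1 (hS.subset hF) Q hQF
  obtain ⟨i₀, hi₀⟩ := exists_add_le_of_add_sum_le hΛ ht L hL
  refine ⟨Function.update c Q i₀, fun i => ?_⟩
  rw [← insert_erase hQF, filter_insert, Function.update_self,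
    filter_congr fun P hP => by rw [Function.update_of_ne (ne_of_mem_erase hP)]]
  split_ifs with hi
  · subst hi
    refine (hc i₀).insert (fun R hR hQR => ?_) ?_
    · have hRQ := mem_filter.1 hR
      exact ne_of_mem_erase hRQ.1 (le_antisymm (hQmax (mem_of_mem_erase hRQ.1) hQR) hQR)
    · rw [filter_insert, if_pos subset_rfl, sum_insert (by simp), filter_filter]
      simpa only [L, and_comm] using hi₀
  · exact hc i

end

theorem stmt12_general (X : Type*) [MeasurableSpace X] (μ : Measure X) (S : Set (Set X))
    (Λ : ℝ) (hΛ : 1 < Λ) (hCar : IsCarleson μ S Λ) (t : ℕ) (ht : 2 ≤ t) :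
    ∃ 𝒮 : Fin t → Set (Set X), (∀ i, 𝒮 i ⊆ S) ∧ (⋃ i, 𝒮 i) = S ∧
      ∀ i, IsCarleson μ (𝒮 i) (1 + (Λ - 1) / t) := by
  classical
  choose c hc using fun F : Finset (Set X) =>
    hCar.exists_coloring_finset hΛ.le (by omega : t ≠ 0) (F.filter (· ∈ S))
      fun _ hP => (Finset.mem_filter.1 hP).2
  obtain ⟨χ, hχ⟩ := Finset.rado_selection c
  refine ⟨fun i => {P ∈ S | χ P = i}, fun i => Set.sep_subset _ _, ?_, fun i => ?_⟩
  · ext P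
    simp
  refine isCarleson_of_forall_finset fun G hG => ?_
  obtain ⟨F, hGF, hχF⟩ := hχ G
  refine (hc F i).subset fun P hP => ?_
  obtain ⟨hPS, rfl⟩ := hG hP
  simp [hGF hP, hPS, hχF P hP]

/-- a `Λ`-Carleson family splits into `t` subfamilies, each
`(1 + (Λ-1)/t)`-Carleson. -/
theorem stmt12 (X : Type*) [MeasurableSpace X] (μ : Measure X) (D : Set (Set X))
    (hDnest : ∀ P ∈ D, ∀ Q ∈ D, P ⊆ Q ∨ Q ⊆ P ∨ Disjoint P Q)
    (hDm : ∀ Q ∈ D, MeasurableSet Q ∧ μ Q < ∞)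
    (S : Set (Set X)) (hS : S ⊆ D) (hSc : S.Countable)
    (Λ : ℝ) (hΛ : 1 < Λ) (hCar : IsCarleson μ S Λ)
    (t : ℕ) (ht : 2 ≤ t) :
    ∃ 𝒮 : Fin t → Set (Set X), (∀ i, 𝒮 i ⊆ S) ∧ (⋃ i, 𝒮 i) = S ∧
      ∀ i, IsCarleson μ (𝒮 i) (1 + (Λ - 1) / t) :=
  stmt12_general X μ S Λ hΛ hCar t ht
end
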